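/- Let 𝒮 = {T_1,…,T_m} be a finite collection of piecewise C² uniformly expanding maps of [0,1], Ω := {1,…,m}^ℤ with left shift σ, and T_ω^n := T_{ω_{n−1}} ∘ ⋯ ∘ T_{ω_0}. Let m be Lebesgue measure on [0,1]; for a nonsingular map T define the transfer operator P_T on L¹(m) by T_*(f·m) = (P_T f)·m (equivalently ∫ (g∘T) f dm = ∫ g (P_T f) dm for all bounded measurable g), set P_ω := P_{T_{ω_0}} and P_ω^n := P_{σ^{n−1}ω} ∘ ⋯ ∘ P_ω, and let BV be the space of functions of bounded variation on [0,1] with norm ‖f‖_BV = ‖f‖_{L¹(m)} + var(f). Assume: (LY) there exist r ≥ 1, M > 0, D > 0, ρ ∈ (0,1) with ‖P_ω f‖_BV ≤ M ‖f‖_BV and var(P_ω^r f) ≤ ρ var(f) + D ‖f‖_{L¹(m)} for all ω and f ∈ BV; (Dec) there exist C > 0, θ ∈ (0,1) with ‖P_ω^n f‖_BV ≤ C θ^n ‖f‖_BV for all n ≥ 1, all ω, and all f ∈ BV with ∫ f dm = 0; (Min) there exists c > 0 with inf_{x∈[0,1]} (P_ω^n 1)(x) ≥ c for all n ≥ 1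 and all ω. Then there exists a unique map ω ↦ h_ω ∈ BV such that P_ω h_ω = h_{σω} for all ω, each h_ω is a probability density, the family (h_ω) is bounded in BV, there is C' > 0 with C'^{−1} ≤ h_ω ≤ C' m-a.e. for every ω, and ω ↦ h_ω ∈ BV is Hölder continuous with respect to the symbolic metric d_θ(ω,ω') := θ^{s(ω,ω')}, where s(ω,ω') := inf{ k ≥ 0 : ω_ℓ ≠ ω'_ℓ for some |ℓ| ≤ k }. -/

import Mathlib

open MeasureTheory Filter Set Topology

noncomputable section

/-- The two-sided shift space on `m` symbols. -/
abbrev Om (m : ℕ) := ℤ → Fin m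

/-- The left shift on the two-sided shift space. -/
def shift {m : ℕ} (ω : Om m) : Om m := fun i => ω (i + 1)

/-- Lebesgue measure on `[0,1]`. -/
def mLeb : Measure ℝ := volume.restrict (Set.Icc 0 1)

/-- `T` is a piecewise `C²` uniformly expanding map of `[0,1]` with expansion constant `lam`. -/
def PiecewiseC2Expanding (T : ℝ → ℝ) (lam : ℝ) : Prop :=
  ∃ (N : ℕ) (a : ℕ → ℝ), 1 ≤ N ∧ a 0 = 0 ∧ a N = 1 ∧ (∀ i < N, a i < a (i + 1)) ∧
    ∀ i < N, ∃ g : ℝ → ℝ,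
      ContDiffOn ℝ 2 g (Set.Icc (a i) (a (i + 1))) ∧
      Set.EqOn T g (Set.Ioo (a i) (a (i + 1))) ∧
      (StrictMonoOn g (Set.Icc (a i) (a (i + 1))) ∨
        StrictAntiOn g (Set.Icc (a i) (a (i + 1)))) ∧
      ∀ x ∈ Set.Icc (a i) (a (i + 1)),
        lam ≤ |derivWithin g (Set.Icc (a i) (a (i + 1))) x|

/-- The transfer-operator cocycle `P_ω^n = P_{σ^{n−1}ω} ∘ ⋯ ∘ P_ω`. -/
def Pcomp {m : ℕ} (Pop : Fin m → (ℝ → ℝ) → ℝ → ℝ) (ω : Om m) : ℕ → (ℝ → ℝ) → ℝ → ℝ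
  | 0 => fun f => f
  | n + 1 => fun f => Pop (ω (n : ℤ)) (Pcomp Pop ω n f)

/-- The total variation of `f` on `[0,1]`. -/
def var (f : ℝ → ℝ) : ℝ := (eVariationOn f (Set.Icc 0 1)).toReal

/-- The BV norm `‖f‖_BV = ‖f‖_{L¹(m)} + var(f)` on `[0,1]`. -/
def BVnorm (f : ℝ → ℝ) : ℝ := (∫ x, |f x| ∂mLeb) + var f

/-- `f` is of bounded variation on `[0,1]` (and integrable). -/
def IsBV (f : ℝ → ℝ) : Prop :=
  Integrable f mLeb ∧ BoundedVariationOn f (Set.Icc 0 1)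

/-- An equivariant family of BV probability densities, uniformly bounded in BV,
uniformly bounded away from `0` and `∞`, and Hölder in `ω` with respect to the
symbolic metric `d_θ`. -/
def GoodFamily (m : ℕ) (Pop : Fin m → (ℝ → ℝ) → ℝ → ℝ) (θ : ℝ)
    (h : Om m → ℝ → ℝ) : Prop :=
  (∀ ω, IsBV (h ω)) ∧
  (∀ ω : Om m, Pop (ω 0) (h ω) =ᵐ[mLeb] h (shift ω)) ∧
  (∀ ω, (∀ᵐ x ∂mLeb, 0 ≤ h ω x) ∧ ∫ x, h ω x ∂mLeb = 1) ∧
  (∃ B : ℝ, ∀ ω, BVnorm (h ω) ≤ B) ∧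
  (∃ C' : ℝ, 0 < C' ∧ ∀ ω, ∀ᵐ x ∂mLeb, C'⁻¹ ≤ h ω x ∧ h ω x ≤ C') ∧
  (∃ K e : ℝ, 0 < K ∧ 0 < e ∧ ∀ (n : ℕ) (ω ω' : Om m),
    (∀ ℓ : ℤ, |ℓ| ≤ (n : ℤ) → ω ℓ = ω' ℓ) →
    BVnorm (fun x => h ω x - h ω' x) ≤ K * (θ ^ e) ^ n)


/-!
The density is the pull-back limit `h_ω = lim_n P^n_{σ⁻ⁿω} 1`, written as the telescoping series
`1 + ∑_k P^k_{σ⁻ᵏω} (P_{ω₋ₖ₋₁} 1 - 1)`. Its terms are images of mean-zero functions, so (Dec) makes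
the series converge geometrically in BV, uniformly in `ω`; this gives the BV bound, the upper bound
and, since the `k`-th term only depends on `ω₋ₖ₋₁, …, ω₋₁`, the Hölder estimate. Equivariance passes
to the limit through the duality relation by dominated convergence, and (Min) gives the lower bound.
Uniqueness is (Dec) again: the difference of two equivariant families at `ω` is the image under
`P^n_{σ⁻ⁿω}` of a mean-zero function.
-/

open scoped ENNReal

section Variation

variable {α E : Type*} [LinearOrder α] [SeminormedAddCommGroup E]

theorem eVariationOn_add_le (f g : α → E) (s : Set α) :
    eVariationOn (f + g) s ≤ eVariationOn f s + eVariationOn g s := by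
  refine iSup_le fun ⟨n, u, hu, us⟩ => ?_
  calc ∑ i ∈ Finset.range n, edist ((f + g) (u (i + 1))) ((f + g) (u i))
      ≤ ∑ i ∈ Finset.range n,
          (edist (f (u (i + 1))) (f (u i)) + edist (g (u (i + 1))) (g (u i))) :=
        Finset.sum_le_sum fun i _ => edist_add_add_le _ _ _ _
    _ ≤ eVariationOn f s + eVariationOn g s := by
        rw [Finset.sum_add_distrib]
        exact add_le_add (eVariationOn.sum_le (f := f) hu us) (eVariationOn.sum_le (f := g) hu us)

theorem eVariationOn_neg (f : α → E) (s : Set α) : eVariationOn (-f) s = eVariationOn f s := by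
  simp only [eVariationOn, Pi.neg_apply, edist_neg_neg]

theorem eVariationOn_sub_le (f g : α → E) (s : Set α) :
    eVariationOn (f - g) s ≤ eVariationOn f s + eVariationOn g s := by
  simpa only [sub_eq_add_neg, eVariationOn_neg] using eVariationOn_add_le f (-g) s

theorem eVariationOn_const (c : E) (s : Set α) : eVariationOn (fun _ : α => c) s = 0 :=
  eVariationOn.constant_on <| by
    rintro _ ⟨x, -, rfl⟩ _ ⟨y, -, rfl⟩; rfl

theorem eVariationOn_sum_le {ι : Type*} (t : Finset ι) (f : ι → α → E) (s : Set α) :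
    eVariationOn (∑ k ∈ t, f k) s ≤ ∑ k ∈ t, eVariationOn (f k) s := by
  classical
  induction t using Finset.induction_on with
  | empty => exact (eVariationOn_const (0 : E) s).le
  | insert k t hk ih =>
    rw [Finset.sum_insert hk, Finset.sum_insert hk]
    exact (eVariationOn_add_le _ _ s).trans (add_le_add le_rfl ih)

theorem eVariationOn_le_of_tendsto {F : ℕ → α → E} {f : α → E} {s : Set α} {C : ℝ≥0∞}
    (hF : ∀ n, eVariationOn (F n) s ≤ C)
    (hlim : ∀ x ∈ s, Tendsto (fun n => F n x) atTop (𝓝 (f x))) :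
    eVariationOn f s ≤ C := by
  by_contra! hC
  obtain ⟨n, hn⟩ := (eVariationOn.lowerSemicontinuous_aux hlim hC).exists
  exact (hF n).not_gt hn

end Variation

section BV

instance : IsProbabilityMeasure mLeb := ⟨by simp [mLeb]⟩

theorem ae_mem_Icc_mLeb : ∀ᵐ x ∂mLeb, x ∈ Set.Icc (0 : ℝ) 1 :=
  ae_restrict_mem measurableSet_Icc

theorem var_nonneg (f : ℝ → ℝ) : 0 ≤ var f := ENNReal.toReal_nonneg

theorem integral_abs_nonneg (f : ℝ → ℝ) : 0 ≤ ∫ x, |f x| ∂mLeb :=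
  integral_nonneg fun _ => abs_nonneg _

theorem BVnorm_nonneg (f : ℝ → ℝ) : 0 ≤ BVnorm f :=
  add_nonneg (integral_abs_nonneg f) (var_nonneg f)

theorem integral_abs_le_BVnorm (f : ℝ → ℝ) : ∫ x, |f x| ∂mLeb ≤ BVnorm f :=
  le_add_of_nonneg_right (var_nonneg f)

theorem var_le_BVnorm (f : ℝ → ℝ) : var f ≤ BVnorm f :=
  le_add_of_nonneg_left (integral_abs_nonneg f)

theorem eVariationOn_eq_ofReal_var {f : ℝ → ℝ} (hf : BoundedVariationOn f (Set.Icc 0 1)) :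
    eVariationOn f (Set.Icc 0 1) = ENNReal.ofReal (var f) :=
  (ENNReal.ofReal_toReal hf).symm

theorem isBV_const (c : ℝ) : IsBV fun _ => c :=
  ⟨integrable_const c, by simp [BoundedVariationOn, eVariationOn_const]⟩

theorem IsBV.add {f g : ℝ → ℝ} (hf : IsBV f) (hg : IsBV g) : IsBV fun x => f x + g x :=
  ⟨hf.1.add hg.1, ne_top_of_le_ne_top (ENNReal.add_ne_top.2 ⟨hf.2, hg.2⟩)
    (eVariationOn_add_le f g _)⟩

theorem IsBV.sub {f g : ℝ → ℝ} (hf : IsBV f) (hg : IsBV g) : IsBV fun x => f x - g x :=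
  ⟨hf.1.sub hg.1, ne_top_of_le_ne_top (ENNReal.add_ne_top.2 ⟨hf.2, hg.2⟩)
    (eVariationOn_sub_le f g _)⟩

theorem BVnorm_const (c : ℝ) : BVnorm (fun _ => c) = |c| := by
  simp [BVnorm, var, eVariationOn_const]

theorem BVnorm_congr {f g : ℝ → ℝ} (h : Set.EqOn f g (Set.Icc 0 1)) : BVnorm f = BVnorm g := by
  have hint : ∫ x, |f x| ∂mLeb = ∫ x, |g x| ∂mLeb :=
    setIntegral_congr_fun measurableSet_Icc fun x hx => by simp only [h hx]
  rw [BVnorm, BVnorm, hint, var, var, eVariationOn.eq_of_eqOn h]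

theorem var_add_le {f g : ℝ → ℝ} (hf : IsBV f) (hg : IsBV g) :
    var (fun x => f x + g x) ≤ var f + var g := by
  refine ENNReal.toReal_le_of_le_ofReal (add_nonneg (var_nonneg f) (var_nonneg g)) ?_
  rw [ENNReal.ofReal_add (var_nonneg f) (var_nonneg g), ← eVariationOn_eq_ofReal_var hf.2,
    ← eVariationOn_eq_ofReal_var hg.2]
  exact eVariationOn_add_le f g _

theorem var_sub_le {f g : ℝ → ℝ} (hf : IsBV f) (hg : IsBV g) :
    var (fun x => f x - g x) ≤ var f + var g := by
  refine ENNReal.toReal_le_of_le_ofReal (add_nonneg (var_nonneg f) (var_nonneg g)) ?_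
  rw [ENNReal.ofReal_add (var_nonneg f) (var_nonneg g), ← eVariationOn_eq_ofReal_var hf.2,
    ← eVariationOn_eq_ofReal_var hg.2]
  exact eVariationOn_sub_le f g _

theorem BVnorm_add_le {f g : ℝ → ℝ} (hf : IsBV f) (hg : IsBV g) :
    BVnorm (fun x => f x + g x) ≤ BVnorm f + BVnorm g := by
  have hint : ∫ x, |f x + g x| ∂mLeb ≤ (∫ x, |f x| ∂mLeb) + ∫ x, |g x| ∂mLeb := by
    rw [← integral_add hf.1.abs hg.1.abs]
    exact integral_mono (hf.1.add hg.1).abs (hf.1.abs.add hg.1.abs) fun x => abs_add_le _ _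
  have := var_add_le hf hg
  unfold BVnorm
  linarith

theorem BVnorm_sub_le {f g : ℝ → ℝ} (hf : IsBV f) (hg : IsBV g) :
    BVnorm (fun x => f x - g x) ≤ BVnorm f + BVnorm g := by
  have hint : ∫ x, |f x - g x| ∂mLeb ≤ (∫ x, |f x| ∂mLeb) + ∫ x, |g x| ∂mLeb := by
    rw [← integral_add hf.1.abs hg.1.abs]
    exact integral_mono (hf.1.sub hg.1).abs (hf.1.abs.add hg.1.abs) fun x => abs_sub _ _
  have := var_sub_le hf hg
  unfold BVnorm
  linarith

/-- Averaging `|f x| ≤ |f y| + var f` over `y ∈ [0,1]`. -/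
theorem abs_le_BVnorm {f : ℝ → ℝ} (hf : IsBV f) {x : ℝ} (hx : x ∈ Set.Icc (0 : ℝ) 1) :
    |f x| ≤ BVnorm f := by
  have hpt : ∀ y ∈ Set.Icc (0 : ℝ) 1, |f x| - var f ≤ |f y| := fun y hy => by
    have := hf.2.dist_le hx hy
    rw [Real.dist_eq] at this
    unfold var
    linarith [abs_sub_abs_le_abs_sub (f x) (f y)]
  have := integral_mono_ae (integrable_const (|f x| - var f)) hf.1.abs
    (ae_mem_Icc_mLeb.mono hpt)
  rw [integral_const, probReal_univ, one_smul] at this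
  unfold BVnorm
  linarith

end BV

section BVSeries

variable {f : ℕ → ℝ → ℝ} {b : ℕ → ℝ}

theorem summable_of_BVnorm_le (hf : ∀ k, IsBV (f k)) (hb : ∀ k, BVnorm (f k) ≤ b k)
    (hbs : Summable b) {x : ℝ} (hx : x ∈ Set.Icc (0 : ℝ) 1) : Summable fun k => f k x :=
  hbs.of_norm_bounded fun k => (abs_le_BVnorm (hf k) hx).trans (hb k)

theorem abs_sum_range_le_tsum (hf : ∀ k, IsBV (f k)) (hb : ∀ k, BVnorm (f k) ≤ b k)
    (hbs : Summable b) (n : ℕ) {x : ℝ} (hx : x ∈ Set.Icc (0 : ℝ) 1) :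
    |∑ k ∈ Finset.range n, f k x| ≤ ∑' k, b k := by
  have hb0 : ∀ k, 0 ≤ b k := fun k => (BVnorm_nonneg _).trans (hb k)
  calc |∑ k ∈ Finset.range n, f k x| ≤ ∑ k ∈ Finset.range n, b k :=
        (Finset.abs_sum_le_sum_abs _ _).trans
          (Finset.sum_le_sum fun k _ => (abs_le_BVnorm (hf k) hx).trans (hb k))
    _ ≤ ∑' k, b k := hbs.sum_le_tsum _ fun k _ => hb0 k

theorem abs_tsum_le_tsum (hf : ∀ k, IsBV (f k)) (hb : ∀ k, BVnorm (f k) ≤ b k)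
    (hbs : Summable b) {x : ℝ} (hx : x ∈ Set.Icc (0 : ℝ) 1) :
    |∑' k, f k x| ≤ ∑' k, b k :=
  le_of_tendsto' (summable_of_BVnorm_le hf hb hbs hx).hasSum.tendsto_sum_nat.abs
    fun n => abs_sum_range_le_tsum hf hb hbs n hx

theorem eVariationOn_tsum_le (hf : ∀ k, IsBV (f k)) (hb : ∀ k, BVnorm (f k) ≤ b k)
    (hbs : Summable b) :
    eVariationOn (fun x => ∑' k, f k x) (Set.Icc 0 1) ≤ ENNReal.ofReal (∑' k, b k) := by
  have hb0 : ∀ k, 0 ≤ b k := fun k => (BVnorm_nonneg _).trans (hb k)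
  refine eVariationOn_le_of_tendsto (F := fun n => ∑ k ∈ Finset.range n, f k) (fun n => ?_)
    fun x hx => by
      simpa only [Finset.sum_apply] using
        (summable_of_BVnorm_le hf hb hbs hx).hasSum.tendsto_sum_nat
  calc eVariationOn (∑ k ∈ Finset.range n, f k) (Set.Icc 0 1)
      ≤ ∑ k ∈ Finset.range n, eVariationOn (f k) (Set.Icc 0 1) := eVariationOn_sum_le _ _ _
    _ ≤ ∑ k ∈ Finset.range n, ENNReal.ofReal (b k) := Finset.sum_le_sum fun k _ => by
        rw [eVariationOn_eq_ofReal_var (hf k).2]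
        exact ENNReal.ofReal_le_ofReal ((var_le_BVnorm _).trans (hb k))
    _ = ENNReal.ofReal (∑ k ∈ Finset.range n, b k) :=
        (ENNReal.ofReal_sum_of_nonneg fun k _ => hb0 k).symm
    _ ≤ ENNReal.ofReal (∑' k, b k) :=
        ENNReal.ofReal_le_ofReal (hbs.sum_le_tsum _ fun k _ => hb0 k)

theorem isBV_tsum (hf : ∀ k, IsBV (f k)) (hb : ∀ k, BVnorm (f k) ≤ b k) (hbs : Summable b) :
    IsBV fun x => ∑' k, f k x := by
  have hmeas : AEStronglyMeasurable (fun x => ∑' k, f k x) mLeb :=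
    aestronglyMeasurable_of_tendsto_ae atTop
      (fun n => (integrable_finsetSum _ fun k _ => (hf k).1).aestronglyMeasurable)
      (ae_mem_Icc_mLeb.mono fun x hx => (summable_of_BVnorm_le hf hb hbs hx).hasSum)
  refine ⟨Integrable.of_bound hmeas (∑' k, b k) ?_,
    ne_top_of_le_ne_top ENNReal.ofReal_ne_top (eVariationOn_tsum_le hf hb hbs)⟩
  exact ae_mem_Icc_mLeb.mono fun x hx => abs_tsum_le_tsum hf hb hbs hx

theorem BVnorm_tsum_le (hf : ∀ k, IsBV (f k)) (hb : ∀ k, BVnorm (f k) ≤ b k)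
    (hbs : Summable b) : BVnorm (fun x => ∑' k, f k x) ≤ 2 * ∑' k, b k := by
  have hb0 : 0 ≤ ∑' k, b k := tsum_nonneg fun k => (BVnorm_nonneg _).trans (hb k)
  have hint : ∫ x, |∑' k, f k x| ∂mLeb ≤ ∑' k, b k := by
    simpa using integral_mono_ae (isBV_tsum hf hb hbs).1.abs (integrable_const (∑' k, b k))
      (ae_mem_Icc_mLeb.mono fun x hx => abs_tsum_le_tsum hf hb hbs hx)
  have hvar : var (fun x => ∑' k, f k x) ≤ ∑' k, b k :=
    ENNReal.toReal_le_of_le_ofReal hb0 (eVariationOn_tsum_le hf hb hbs)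
  unfold BVnorm
  linarith

theorem integral_tsum_of_BVnorm_le (hf : ∀ k, IsBV (f k)) (hb : ∀ k, BVnorm (f k) ≤ b k)
    (hbs : Summable b) : ∫ x, ∑' k, f k x ∂mLeb = ∑' k, ∫ x, f k x ∂mLeb :=
  (integral_tsum_of_summable_integral_norm (fun k => (hf k).1) <|
    hbs.of_nonneg_of_le (fun _ => integral_nonneg fun _ => norm_nonneg _)
      fun k => (integral_abs_le_BVnorm _).trans (hb k)).symm

end BVSeries

section Duality

variable {α : Type*} [MeasurableSpace α] {μ : Measure α}

def IsTransferOperator (μ : Measure α) (T : α → α) (P : (α → ℝ) → α → ℝ) : Prop :=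
  ∀ f : α → ℝ, Integrable f μ → ∀ g : α → ℝ, Measurable g → (∃ C : ℝ, ∀ x, |g x| ≤ C) →
    ∫ x, g (T x) * f x ∂μ = ∫ x, g x * P f x ∂μ

theorem integrable_bdd_mul {g f : α → ℝ} (hg : Measurable g) (hgC : ∃ C : ℝ, ∀ x, |g x| ≤ C)
    (hf : Integrable f μ) : Integrable (fun x => g x * f x) μ :=
  let ⟨_, hC⟩ := hgC
  hf.bdd_mul hg.aestronglyMeasurable (ae_of_all _ hC)

theorem ae_eq_of_forall_integral_bdd_mul_eq [SigmaFinite μ] {F G : α → ℝ}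
    (hF : Integrable F μ) (hG : Integrable G μ)
    (h : ∀ g : α → ℝ, Measurable g → (∃ C : ℝ, ∀ x, |g x| ≤ C) →
      ∫ x, g x * F x ∂μ = ∫ x, g x * G x ∂μ) : F =ᵐ[μ] G := by
  refine ae_eq_of_forall_setIntegral_eq_of_sigmaFinite (fun s _ _ => hF.integrableOn)
    (fun s _ _ => hG.integrableOn) fun s hs _ => ?_
  have hind : ∀ H : α → ℝ, (fun x => s.indicator 1 x * H x) = s.indicator H := fun H => by
    ext x; by_cases hx : x ∈ s <;> simp [hx]
  have := h (s.indicator 1) (measurable_const.indicator hs)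
    ⟨1, fun x => by by_cases hx : x ∈ s <;> simp [hx]⟩
  rwa [hind, hind, integral_indicator hs, integral_indicator hs] at this

theorem tendsto_integral_bdd_mul [IsFiniteMeasure μ] {v u : α → ℝ} {us : ℕ → α → ℝ} {Cv C : ℝ}
    (hv : Measurable v) (hvC : ∀ x, |v x| ≤ Cv) (hus : ∀ n, Integrable (us n) μ)
    (husC : ∀ n, ∀ᵐ x ∂μ, |us n x| ≤ C)
    (hlim : ∀ᵐ x ∂μ, Tendsto (fun n => us n x) atTop (𝓝 (u x))) :
    Tendsto (fun n => ∫ x, v x * us n x ∂μ) atTop (𝓝 (∫ x, v x * u x ∂μ)) :=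
  tendsto_integral_filter_of_norm_le_const
    (Eventually.of_forall fun n => hv.aestronglyMeasurable.mul (hus n).aestronglyMeasurable)
    ⟨Cv * C, Eventually.of_forall fun n => (husC n).mono fun x hx => by
      rw [Real.norm_eq_abs, abs_mul]
      exact mul_le_mul (hvC x) hx (abs_nonneg _) ((abs_nonneg _).trans (hvC x))⟩
    (hlim.mono fun _ hx => hx.const_mul _)

namespace IsTransferOperator

variable {T : α → α} {P : (α → ℝ) → α → ℝ}

theorem integral_eq (hP : IsTransferOperator μ T P) {f : α → ℝ} (hf : Integrable f μ) :
    ∫ x, P f x ∂μ = ∫ x, f x ∂μ := by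
  simpa using (hP f hf 1 measurable_const ⟨1, fun _ => by simp⟩).symm

theorem congr_ae [SigmaFinite μ] (hP : IsTransferOperator μ T P) {f f' : α → ℝ}
    (hf : Integrable f μ) (hf' : Integrable f' μ) (hPf : Integrable (P f) μ)
    (hPf' : Integrable (P f') μ) (h : f =ᵐ[μ] f') : P f =ᵐ[μ] P f' :=
  ae_eq_of_forall_integral_bdd_mul_eq hPf hPf' fun g hg hgC => by
    rw [← hP f hf g hg hgC, ← hP f' hf' g hg hgC]
    exact integral_congr_ae (h.mono fun x hx => by simp only [hx])

theorem sub_ae [SigmaFinite μ] (hP : IsTransferOperator μ T P) (hT : Measurable T)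
    {f f' : α → ℝ} (hf : Integrable f μ) (hf' : Integrable f' μ)
    (hPf : Integrable (P f) μ) (hPf' : Integrable (P f') μ)
    (hPsub : Integrable (P fun x => f x - f' x) μ) :
    P (fun x => f x - f' x) =ᵐ[μ] fun x => P f x - P f' x :=
  ae_eq_of_forall_integral_bdd_mul_eq hPsub (hPf.sub hPf') fun g hg hgC => by
    have hgT : ∃ C : ℝ, ∀ x, |g (T x)| ≤ C := let ⟨C, hC⟩ := hgC; ⟨C, fun x => hC (T x)⟩
    simp only [mul_sub]
    rw [← hP (fun x => f x - f' x) (hf.sub hf') g hg hgC,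
      integral_sub (integrable_bdd_mul hg hgC hPf)
      (integrable_bdd_mul hg hgC hPf'), ← hP f hf g hg hgC, ← hP f' hf' g hg hgC,
      ← integral_sub (integrable_bdd_mul (g := fun x => g (T x)) (hg.comp hT) hgT hf)
        (integrable_bdd_mul (g := fun x => g (T x)) (hg.comp hT) hgT hf')]
    simp only [mul_sub]

/-- Dominated convergence on both sides of the duality relation. -/
theorem ae_eq_of_tendsto [IsFiniteMeasure μ] (hP : IsTransferOperator μ T P) (hT : Measurable T)
    {f q : α → ℝ} {fs qs : ℕ → α → ℝ} {C : ℝ} (hf : Integrable f μ) (hPf : Integrable (P f) μ)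
    (hq : Integrable q μ) (hfs : ∀ n, Integrable (fs n) μ) (hqs : ∀ n, Integrable (qs n) μ)
    (hPfs : ∀ n, P (fs n) =ᵐ[μ] qs n) (hfsC : ∀ n, ∀ᵐ x ∂μ, |fs n x| ≤ C)
    (hqsC : ∀ n, ∀ᵐ x ∂μ, |qs n x| ≤ C)
    (hfs_lim : ∀ᵐ x ∂μ, Tendsto (fun n => fs n x) atTop (𝓝 (f x)))
    (hqs_lim : ∀ᵐ x ∂μ, Tendsto (fun n => qs n x) atTop (𝓝 (q x))) :
    P f =ᵐ[μ] q := by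
  refine ae_eq_of_forall_integral_bdd_mul_eq hPf hq fun g hg ⟨Cg, hCg⟩ => ?_
  have hlhs := tendsto_integral_bdd_mul (v := fun x => g (T x)) (hg.comp hT)
    (fun x => hCg (T x)) hfs hfsC hfs_lim
  have hrhs := tendsto_integral_bdd_mul hg hCg hqs hqsC hqs_lim
  have heq : ∀ n, ∫ x, g (T x) * fs n x ∂μ = ∫ x, g x * qs n x ∂μ := fun n => by
    rw [hP _ (hfs n) g hg ⟨Cg, hCg⟩]
    exact integral_congr_ae ((hPfs n).mono fun x hx => by simp only [hx])
  rw [← hP f hf g hg ⟨Cg, hCg⟩]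
  exact tendsto_nhds_unique hlhs (by simpa only [heq] using hrhs)

end IsTransferOperator

end Duality

section Cocycle

variable {m : ℕ}

def shiftBack (n : ℕ) (ω : Om m) : Om m := fun i => ω (i - n)

@[simp]
theorem shiftBack_zero (ω : Om m) : shiftBack 0 ω = ω := by
  funext i; simp [shiftBack]

theorem shift_shiftBack_succ (n : ℕ) (ω : Om m) : shift (shiftBack (n + 1) ω) = shiftBack n ω := by
  funext i; simp only [shift, shiftBack]; congr 1; push_cast; ring

theorem shiftBack_succ_shift (n : ℕ) (ω : Om m) : shiftBack (n + 1) (shift ω) = shiftBack n ω := by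
  funext i; simp only [shift, shiftBack]; congr 1; push_cast; ring

variable (Pop : Fin m → (ℝ → ℝ) → ℝ → ℝ)

theorem Pcomp_succ' (ω : Om m) (n : ℕ) (f : ℝ → ℝ) :
    Pcomp Pop ω (n + 1) f = Pcomp Pop (shift ω) n (Pop (ω 0) f) := by
  induction n with
  | zero => rfl
  | succ n ih =>
    change Pop (ω ((n + 1 : ℕ) : ℤ)) (Pcomp Pop ω (n + 1) f) = Pop (ω ((n : ℤ) + 1)) _
    rw [ih]
    push_cast
    rfl

theorem Pcomp_congr_word {ω ω' : Om m} {n : ℕ} (h : ∀ j : ℕ, j < n → ω j = ω' j)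
    (f : ℝ → ℝ) : Pcomp Pop ω n f = Pcomp Pop ω' n f := by
  induction n with
  | zero => rfl
  | succ n ih =>
    change Pop (ω n) (Pcomp Pop ω n f) = Pop (ω' n) (Pcomp Pop ω' n f)
    rw [h n n.lt_succ_self, ih fun j hj => h j (hj.trans n.lt_succ_self)]

theorem Pcomp_shiftBack_succ_shift (n : ℕ) (ω : Om m) (f : ℝ → ℝ) :
    Pcomp Pop (shiftBack (n + 1) (shift ω)) (n + 1) f =
      Pop (ω 0) (Pcomp Pop (shiftBack n ω) n f) := by
  change Pop (shiftBack (n + 1) (shift ω) n) _ = _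
  rw [shiftBack_succ_shift]
  simp [shiftBack]

def IsEquivariant (h : Om m → ℝ → ℝ) : Prop :=
  ∀ ω : Om m, Pop (ω 0) (h ω) =ᵐ[mLeb] h (shift ω)

/-- Hypothesis (Dec). -/
def HasBVDecay (C θ : ℝ) : Prop :=
  ∀ n : ℕ, 1 ≤ n → ∀ (ω : Om m) (f : ℝ → ℝ), IsBV f →
    (∫ x, f x ∂mLeb) = 0 → BVnorm (Pcomp Pop ω n f) ≤ C * θ ^ n * BVnorm f

end Cocycle

structure IsTransferFamily {m : ℕ} (T : Fin m → ℝ → ℝ) (Pop : Fin m → (ℝ → ℝ) → ℝ → ℝ) :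
    Prop where
  measurable : ∀ i, Measurable (T i)
  transfer : ∀ i, IsTransferOperator mLeb (T i) (Pop i)
  isBV : ∀ i f, IsBV f → IsBV (Pop i f)

namespace IsTransferFamily

variable {m : ℕ} {T : Fin m → ℝ → ℝ} {Pop : Fin m → (ℝ → ℝ) → ℝ → ℝ}

theorem isBV_Pcomp (hP : IsTransferFamily T Pop) {f : ℝ → ℝ} (hf : IsBV f) (ω : Om m)
    (n : ℕ) : IsBV (Pcomp Pop ω n f) := by
  induction n with
  | zero => exact hf
  | succ n ih => exact hP.isBV _ _ ih

theorem integral_Pcomp (hP : IsTransferFamily T Pop) {f : ℝ → ℝ} (hf : IsBV f) (ω : Om m)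
    (n : ℕ) : ∫ x, Pcomp Pop ω n f x ∂mLeb = ∫ x, f x ∂mLeb := by
  induction n with
  | zero => rfl
  | succ n ih => exact ((hP.transfer _).integral_eq (hP.isBV_Pcomp hf ω n).1).trans ih

theorem Pop_congr_ae (hP : IsTransferFamily T Pop) (i : Fin m) {f f' : ℝ → ℝ} (hf : IsBV f)
    (hf' : IsBV f') (h : f =ᵐ[mLeb] f') : Pop i f =ᵐ[mLeb] Pop i f' :=
  (hP.transfer i).congr_ae hf.1 hf'.1 (hP.isBV i f hf).1 (hP.isBV i f' hf').1 h

theorem Pcomp_congr_ae (hP : IsTransferFamily T Pop) {f f' : ℝ → ℝ} (hf : IsBV f)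
    (hf' : IsBV f') (h : f =ᵐ[mLeb] f') (ω : Om m) (n : ℕ) :
    Pcomp Pop ω n f =ᵐ[mLeb] Pcomp Pop ω n f' := by
  induction n with
  | zero => exact h
  | succ n ih => exact hP.Pop_congr_ae _ (hP.isBV_Pcomp hf ω n) (hP.isBV_Pcomp hf' ω n) ih

theorem Pcomp_sub_ae (hP : IsTransferFamily T Pop) {f f' : ℝ → ℝ} (hf : IsBV f)
    (hf' : IsBV f') (ω : Om m) (n : ℕ) :
    Pcomp Pop ω n (fun x => f x - f' x) =ᵐ[mLeb]
      fun x => Pcomp Pop ω n f x - Pcomp Pop ω n f' x := by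
  induction n with
  | zero => rfl
  | succ n ih =>
    have hfn := hP.isBV_Pcomp hf ω n
    have hfn' := hP.isBV_Pcomp hf' ω n
    exact (hP.Pop_congr_ae _ (hP.isBV_Pcomp (hf.sub hf') ω n) (hfn.sub hfn') ih).trans <|
      (hP.transfer _).sub_ae (hP.measurable _) hfn.1 hfn'.1 (hP.isBV _ _ hfn).1
        (hP.isBV _ _ hfn').1 (hP.isBV _ _ (hfn.sub hfn')).1

theorem Pcomp_shiftBack_ae_eq (hP : IsTransferFamily T Pop) {h : Om m → ℝ → ℝ}
    (hBV : ∀ ω, IsBV (h ω)) (heq : IsEquivariant Pop h) (n : ℕ) (ω : Om m) :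
    Pcomp Pop (shiftBack n ω) n (h (shiftBack n ω)) =ᵐ[mLeb] h ω := by
  induction n generalizing ω with
  | zero => simp only [shiftBack_zero]; rfl
  | succ n ih =>
    have hstep := heq (shiftBack (n + 1) ω)
    rw [shift_shiftBack_succ] at hstep
    rw [Pcomp_succ', shift_shiftBack_succ]
    exact (hP.Pcomp_congr_ae (hP.isBV _ _ (hBV _)) (hBV _) hstep _ n).trans (ih ω)

theorem ae_eq_of_isEquivariant (hP : IsTransferFamily T Pop) {C θ : ℝ}
    (hdec : HasBVDecay Pop C θ) (hθ0 : 0 ≤ θ) (hθ1 : θ < 1) {h h' : Om m → ℝ → ℝ}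
    (hBV : ∀ ω, IsBV (h ω)) (hBV' : ∀ ω, IsBV (h' ω)) (heq : IsEquivariant Pop h)
    (heq' : IsEquivariant Pop h') (hint : ∀ ω, ∫ x, h ω x ∂mLeb = ∫ x, h' ω x ∂mLeb)
    (hB : ∃ B, ∀ ω, BVnorm (h ω) ≤ B) (hB' : ∃ B, ∀ ω, BVnorm (h' ω) ≤ B) (ω : Om m) :
    h ω =ᵐ[mLeb] h' ω := by
  obtain ⟨B, hB⟩ := hB
  obtain ⟨B', hB'⟩ := hB'
  have hC : 0 ≤ max C 1 := le_max_of_le_right zero_le_one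
  have hbound : ∀ n, 1 ≤ n →
      ∫ x, |h ω x - h' ω x| ∂mLeb ≤ max C 1 * θ ^ n * (B + B') := fun n hn => by
    set W := shiftBack n ω
    have hdiff : Pcomp Pop W n (fun x => h W x - h' W x) =ᵐ[mLeb] fun x => h ω x - h' ω x :=
      (hP.Pcomp_sub_ae (hBV W) (hBV' W) W n).trans <|
        (hP.Pcomp_shiftBack_ae_eq hBV heq n ω).sub (hP.Pcomp_shiftBack_ae_eq hBV' heq' n ω)
    have hmean : ∫ x, (h W x - h' W x) ∂mLeb = 0 := by
      rw [integral_sub (hBV W).1 (hBV' W).1, hint, sub_self]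
    calc ∫ x, |h ω x - h' ω x| ∂mLeb
        = ∫ x, |Pcomp Pop W n (fun x => h W x - h' W x) x| ∂mLeb :=
          integral_congr_ae (hdiff.mono fun x hx => by simp only [hx])
      _ ≤ C * θ ^ n * BVnorm (fun x => h W x - h' W x) :=
          (integral_abs_le_BVnorm _).trans (hdec n hn W _ ((hBV W).sub (hBV' W)) hmean)
      _ ≤ max C 1 * θ ^ n * BVnorm (fun x => h W x - h' W x) :=
          mul_le_mul_of_nonneg_right (mul_le_mul_of_nonneg_right (le_max_left _ _)
            (pow_nonneg hθ0 n)) (BVnorm_nonneg _)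
      _ ≤ max C 1 * θ ^ n * (B + B') := by
          gcongr
          exact (BVnorm_sub_le (hBV W) (hBV' W)).trans (add_le_add (hB W) (hB' W))
  have hlim : Tendsto (fun n : ℕ => max C 1 * θ ^ n * (B + B')) atTop (𝓝 0) := by
    simpa using ((tendsto_pow_atTop_nhds_zero_of_lt_one hθ0 hθ1).const_mul (max C 1)).mul_const
      (B + B')
  have hzero : ∫ x, |h ω x - h' ω x| ∂mLeb = 0 :=
    le_antisymm (ge_of_tendsto hlim (eventually_atTop.2 ⟨1, hbound⟩)) (integral_abs_nonneg _)
  filter_upwards [(integral_eq_zero_iff_of_nonneg (fun x => abs_nonneg _)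
    ((hBV ω).1.sub (hBV' ω).1).abs).1 hzero] with x hx
  exact sub_eq_zero.1 (abs_eq_zero.1 hx)

end IsTransferFamily

section Density

variable {m : ℕ} (Pop : Fin m → (ℝ → ℝ) → ℝ → ℝ)

/-- `P^k_{σ⁻ᵏω} (P_{ω₋ₖ₋₁} 1 - 1)`, which agrees a.e. with
`P^{k+1}_{σ⁻ᵏ⁻¹ω} 1 - P^k_{σ⁻ᵏω} 1`. -/
def increment (k : ℕ) (ω : Om m) : ℝ → ℝ :=
  Pcomp Pop (shiftBack k ω) k fun x => Pop (ω (-k - 1)) (fun _ => 1) x - 1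

def partialDensity (n : ℕ) (ω : Om m) : ℝ → ℝ :=
  fun x => 1 + ∑ k ∈ Finset.range n, increment Pop k ω x

def density (ω : Om m) : ℝ → ℝ :=
  fun x => 1 + ∑' k, increment Pop k ω x

variable {Pop}

theorem increment_congr {k : ℕ} {ω ω' : Om m} (h : ∀ ℓ : ℤ, |ℓ| ≤ k + 1 → ω ℓ = ω' ℓ) :
    increment Pop k ω = increment Pop k ω' := by
  unfold increment
  rw [h (-k - 1) (by rw [abs_of_neg (by omega)]; omega)]
  exact Pcomp_congr_word Pop (fun j hj => h (j - k) (by rw [abs_of_neg (by omega)]; omega)) _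

theorem isBV_finset_sum {ι : Type*} (s : Finset ι) {f : ι → ℝ → ℝ} (hf : ∀ i ∈ s, IsBV (f i)) :
    IsBV fun x => ∑ i ∈ s, f i x := by
  classical
  induction s using Finset.induction_on with
  | empty => simpa using isBV_const 0
  | insert i s hi ih =>
    simp only [Finset.sum_insert hi]
    exact (hf i (s.mem_insert_self i)).add (ih fun j hj => hf j (Finset.mem_insert_of_mem hj))

variable {T : Fin m → ℝ → ℝ}

namespace IsTransferFamily

theorem isBV_Pop_one_sub_one (hP : IsTransferFamily T Pop) (i : Fin m) :
    IsBV fun x => Pop i (fun _ => 1) x - 1 :=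
  (hP.isBV _ _ (isBV_const 1)).sub (isBV_const 1)

theorem integral_Pop_one_sub_one (hP : IsTransferFamily T Pop) (i : Fin m) :
    ∫ x, (Pop i (fun _ => 1) x - 1) ∂mLeb = 0 := by
  rw [integral_sub (hP.isBV _ _ (isBV_const 1)).1 (integrable_const 1),
    (hP.transfer _).integral_eq (integrable_const 1), sub_self]

theorem isBV_increment (hP : IsTransferFamily T Pop) (k : ℕ) (ω : Om m) :
    IsBV (increment Pop k ω) :=
  hP.isBV_Pcomp (hP.isBV_Pop_one_sub_one _) _ _

theorem integral_increment (hP : IsTransferFamily T Pop) (k : ℕ) (ω : Om m) :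
    ∫ x, increment Pop k ω x ∂mLeb = 0 := by
  rw [increment, hP.integral_Pcomp (hP.isBV_Pop_one_sub_one _), hP.integral_Pop_one_sub_one]

theorem exists_BVnorm_increment_le (hP : IsTransferFamily T Pop) {C θ : ℝ}
    (hdec : HasBVDecay Pop C θ) (hθ : 0 ≤ θ) :
    ∃ K, 0 ≤ K ∧ ∀ k ω, BVnorm (increment Pop k ω) ≤ K * θ ^ k := by
  set F := ∑ i, BVnorm fun x => Pop i (fun _ => 1) x - 1
  have hF : ∀ i, BVnorm (fun x => Pop i (fun _ => 1) x - 1) ≤ F := fun i =>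
    Finset.single_le_sum (f := fun j => BVnorm fun x => Pop j (fun _ => 1) x - 1)
      (fun j _ => BVnorm_nonneg _) (Finset.mem_univ i)
  have hF0 : 0 ≤ F := Finset.sum_nonneg fun i _ => BVnorm_nonneg _
  refine ⟨max C 1 * F, mul_nonneg (le_max_of_le_right zero_le_one) hF0, fun k ω => ?_⟩
  rcases Nat.eq_zero_or_pos k with rfl | hk
  · rw [pow_zero, mul_one]
    exact (hF _).trans (le_mul_of_one_le_left hF0 (le_max_right C 1))
  calc BVnorm (increment Pop k ω)
      ≤ C * θ ^ k * BVnorm fun x => Pop (ω (-k - 1)) (fun _ => 1) x - 1 :=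
        hdec k hk _ _ (hP.isBV_Pop_one_sub_one _) (hP.integral_Pop_one_sub_one _)
    _ ≤ max C 1 * θ ^ k * F := by
        gcongr
        · exact BVnorm_nonneg _
        · exact le_max_left _ _
        · exact hF _
    _ = max C 1 * F * θ ^ k := by ring

end IsTransferFamily

end Density

namespace IsTransferFamily

variable {m : ℕ} {T : Fin m → ℝ → ℝ} {Pop : Fin m → (ℝ → ℝ) → ℝ → ℝ} {b : ℕ → ℝ}

theorem summable_increment (hP : IsTransferFamily T Pop)
    (hb : ∀ k ω, BVnorm (increment Pop k ω) ≤ b k) (hbs : Summable b) (ω : Om m) {x : ℝ}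
    (hx : x ∈ Set.Icc (0 : ℝ) 1) : Summable fun k => increment Pop k ω x :=
  summable_of_BVnorm_le (hP.isBV_increment · ω) (hb · ω) hbs hx

theorem tendsto_partialDensity (hP : IsTransferFamily T Pop)
    (hb : ∀ k ω, BVnorm (increment Pop k ω) ≤ b k) (hbs : Summable b) (ω : Om m) {x : ℝ}
    (hx : x ∈ Set.Icc (0 : ℝ) 1) :
    Tendsto (fun n => partialDensity Pop n ω x) atTop (𝓝 (density Pop ω x)) :=
  (hP.summable_increment hb hbs ω hx).hasSum.tendsto_sum_nat.const_add 1

theorem abs_partialDensity_le (hP : IsTransferFamily T Pop)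
    (hb : ∀ k ω, BVnorm (increment Pop k ω) ≤ b k) (hbs : Summable b) (n : ℕ) (ω : Om m)
    {x : ℝ} (hx : x ∈ Set.Icc (0 : ℝ) 1) : |partialDensity Pop n ω x| ≤ 1 + ∑' k, b k :=
  (abs_add_le _ _).trans <| by
    rw [abs_one]
    exact add_le_add le_rfl (abs_sum_range_le_tsum (hP.isBV_increment · ω) (hb · ω) hbs n hx)

theorem abs_density_le (hP : IsTransferFamily T Pop)
    (hb : ∀ k ω, BVnorm (increment Pop k ω) ≤ b k) (hbs : Summable b) (ω : Om m) {x : ℝ}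
    (hx : x ∈ Set.Icc (0 : ℝ) 1) : |density Pop ω x| ≤ 1 + ∑' k, b k :=
  le_of_tendsto' (hP.tendsto_partialDensity hb hbs ω hx).abs
    fun n => hP.abs_partialDensity_le hb hbs n ω hx

theorem isBV_partialDensity (hP : IsTransferFamily T Pop) (n : ℕ) (ω : Om m) :
    IsBV (partialDensity Pop n ω) :=
  (isBV_const 1).add (isBV_finset_sum _ fun k _ => hP.isBV_increment k ω)

theorem isBV_density (hP : IsTransferFamily T Pop)
    (hb : ∀ k ω, BVnorm (increment Pop k ω) ≤ b k) (hbs : Summable b) (ω : Om m) :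
    IsBV (density Pop ω) :=
  (isBV_const 1).add (isBV_tsum (hP.isBV_increment · ω) (hb · ω) hbs)

theorem BVnorm_density_le (hP : IsTransferFamily T Pop)
    (hb : ∀ k ω, BVnorm (increment Pop k ω) ≤ b k) (hbs : Summable b) (ω : Om m) :
    BVnorm (density Pop ω) ≤ 1 + 2 * ∑' k, b k := by
  have hsum := BVnorm_tsum_le (hP.isBV_increment · ω) (hb · ω) hbs
  refine (BVnorm_add_le (isBV_const 1) (isBV_tsum (hP.isBV_increment · ω) (hb · ω) hbs)).trans ?_
  rw [BVnorm_const, abs_one]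
  exact add_le_add le_rfl hsum

theorem integral_density (hP : IsTransferFamily T Pop)
    (hb : ∀ k ω, BVnorm (increment Pop k ω) ≤ b k) (hbs : Summable b) (ω : Om m) :
    ∫ x, density Pop ω x ∂mLeb = 1 := by
  simp only [density]
  rw [integral_add (integrable_const 1)
    (isBV_tsum (hP.isBV_increment · ω) (hb · ω) hbs).1,
    integral_tsum_of_BVnorm_le (hP.isBV_increment · ω) (hb · ω) hbs]
  simp [hP.integral_increment]

theorem partialDensity_ae_eq (hP : IsTransferFamily T Pop) (n : ℕ) (ω : Om m) :
    partialDensity Pop n ω =ᵐ[mLeb] Pcomp Pop (shiftBack n ω) n fun _ => 1 := by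
  induction n with
  | zero => exact Eventually.of_forall fun x => by simp [partialDensity, Pcomp]
  | succ n ih =>
    have hsucc : Pcomp Pop (shiftBack (n + 1) ω) (n + 1) (fun _ => 1) =
        Pcomp Pop (shiftBack n ω) n (Pop (ω (-n - 1)) fun _ => 1) := by
      have hfirst : shiftBack (n + 1) ω 0 = ω (-n - 1) := by
        simp only [shiftBack]; congr 1; push_cast; ring
      rw [Pcomp_succ', shift_shiftBack_succ, hfirst]
    filter_upwards [ih, hP.Pcomp_sub_ae (hP.isBV _ _ (isBV_const 1)) (isBV_const 1)
      (shiftBack n ω) n] with x hpartial hincr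
    change 1 + ∑ k ∈ Finset.range (n + 1), increment Pop k ω x = _
    rw [Finset.sum_range_succ, ← add_assoc, hsucc]
    change partialDensity Pop n ω x + increment Pop n ω x = _
    rw [hpartial, increment, hincr]
    ring

theorem Pop_partialDensity_ae_eq (hP : IsTransferFamily T Pop) (n : ℕ) (ω : Om m) :
    Pop (ω 0) (partialDensity Pop n ω) =ᵐ[mLeb] partialDensity Pop (n + 1) (shift ω) := by
  refine (hP.Pop_congr_ae _ (hP.isBV_partialDensity n ω) (hP.isBV_Pcomp (isBV_const 1) _ n)
    (hP.partialDensity_ae_eq n ω)).trans ?_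
  rw [← Pcomp_shiftBack_succ_shift Pop n ω]
  exact (hP.partialDensity_ae_eq (n + 1) (shift ω)).symm

theorem le_density (hP : IsTransferFamily T Pop)
    (hb : ∀ k ω, BVnorm (increment Pop k ω) ≤ b k) (hbs : Summable b) {c : ℝ}
    (hMin : ∀ n : ℕ, 1 ≤ n → ∀ (ω : Om m), ∀ x ∈ Set.Icc (0 : ℝ) 1,
      c ≤ Pcomp Pop ω n (fun _ => 1) x) (ω : Om m) :
    ∀ᵐ x ∂mLeb, c ≤ density Pop ω x := by
  filter_upwards [ae_all_iff.2 fun n => hP.partialDensity_ae_eq n ω, ae_mem_Icc_mLeb]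
    with x hpartial hx
  refine ge_of_tendsto (hP.tendsto_partialDensity hb hbs ω hx) (eventually_atTop.2 ⟨1, ?_⟩)
  intro n hn
  rw [hpartial n]
  exact hMin n hn _ x hx

theorem isEquivariant_density (hP : IsTransferFamily T Pop)
    (hb : ∀ k ω, BVnorm (increment Pop k ω) ≤ b k) (hbs : Summable b) :
    IsEquivariant Pop (density Pop) := fun ω =>
  (hP.transfer (ω 0)).ae_eq_of_tendsto (hP.measurable (ω 0)) (C := 1 + ∑' k, b k)
    (hP.isBV_density hb hbs ω).1 (hP.isBV _ _ (hP.isBV_density hb hbs ω)).1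
    (hP.isBV_density hb hbs (shift ω)).1
    (fun n => (hP.isBV_partialDensity n ω).1) (fun n => (hP.isBV_partialDensity (n + 1) _).1)
    (fun n => hP.Pop_partialDensity_ae_eq n ω)
    (fun n => ae_mem_Icc_mLeb.mono fun _ hx => hP.abs_partialDensity_le hb hbs n ω hx)
    (fun n => ae_mem_Icc_mLeb.mono fun _ hx => hP.abs_partialDensity_le hb hbs (n + 1) _ hx)
    (ae_mem_Icc_mLeb.mono fun _ hx => hP.tendsto_partialDensity hb hbs ω hx)
    (ae_mem_Icc_mLeb.mono fun _ hx =>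
      (hP.tendsto_partialDensity hb hbs (shift ω) hx).comp (tendsto_add_atTop_nat 1))

theorem BVnorm_density_sub_le (hP : IsTransferFamily T Pop) {K θ : ℝ}
    (hK : ∀ k ω, BVnorm (increment Pop k ω) ≤ K * θ ^ k) (hθ0 : 0 ≤ θ) (hθ1 : θ < 1) {n : ℕ}
    {ω ω' : Om m} (hagree : ∀ ℓ : ℤ, |ℓ| ≤ n → ω ℓ = ω' ℓ) :
    BVnorm (fun x => density Pop ω x - density Pop ω' x) ≤ 4 * K * (1 - θ)⁻¹ * θ ^ n := by
  have hgeom := summable_geometric_of_lt_one hθ0 hθ1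
  have hsame : ∀ k ∈ Finset.range n, increment Pop k ω = increment Pop k ω' := fun k hk =>
    increment_congr fun ℓ hℓ => hagree ℓ (hℓ.trans (by have := Finset.mem_range.1 hk; omega))
  have htail_BV : ∀ j, IsBV fun x => increment Pop (j + n) ω x - increment Pop (j + n) ω' x :=
    fun j => (hP.isBV_increment _ ω).sub (hP.isBV_increment _ ω')
  have htail_le : ∀ j, BVnorm (fun x => increment Pop (j + n) ω x - increment Pop (j + n) ω' x)
      ≤ 2 * K * θ ^ n * θ ^ j := fun j => by
    refine (BVnorm_sub_le (hP.isBV_increment _ ω) (hP.isBV_increment _ ω')).trans ?_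
    linarith [hK (j + n) ω, hK (j + n) ω', show K * θ ^ (j + n) = K * θ ^ n * θ ^ j by ring]
  have htail := BVnorm_tsum_le htail_BV htail_le (hgeom.mul_left _)
  rw [tsum_mul_left, tsum_geometric_of_lt_one hθ0 hθ1] at htail
  have hEqOn : Set.EqOn (fun x => density Pop ω x - density Pop ω' x)
      (fun x => ∑' j, (increment Pop (j + n) ω x - increment Pop (j + n) ω' x))
      (Set.Icc 0 1) := fun x hx => by
    have hs := hP.summable_increment hK (hgeom.mul_left K) ω hx
    have hs' := hP.summable_increment hK (hgeom.mul_left K) ω' hx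
    simp only [density]
    rw [← hs.sum_add_tsum_nat_add n, ← hs'.sum_add_tsum_nat_add n,
      Finset.sum_congr rfl fun k hk => congrFun (hsame k hk) x,
      ((summable_nat_add_iff n).2 hs).tsum_sub ((summable_nat_add_iff n).2 hs')]
    ring
  rw [BVnorm_congr hEqOn]
  linarith

theorem goodFamily_density (hP : IsTransferFamily T Pop) {C θ c : ℝ}
    (hdec : HasBVDecay Pop C θ) (hθ : θ ∈ Set.Ioo (0 : ℝ) 1) (hc : 0 < c)
    (hMin : ∀ n : ℕ, 1 ≤ n → ∀ (ω : Om m), ∀ x ∈ Set.Icc (0 : ℝ) 1,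
      c ≤ Pcomp Pop ω n (fun _ => 1) x) :
    GoodFamily m Pop θ (density Pop) := by
  obtain ⟨K, hK0, hK⟩ := hP.exists_BVnorm_increment_le hdec hθ.1.le
  have hbs : Summable fun k => K * θ ^ k :=
    (summable_geometric_of_lt_one hθ.1.le hθ.2).mul_left K
  set U := 1 + ∑' k, K * θ ^ k
  have hU : 0 < U :=
    add_pos_of_pos_of_nonneg one_pos (tsum_nonneg fun k => mul_nonneg hK0 (pow_nonneg hθ.1.le k))
  refine ⟨hP.isBV_density hK hbs, hP.isEquivariant_density hK hbs,
    fun ω => ⟨(hP.le_density hK hbs hMin ω).mono fun x hx => hc.le.trans hx,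
      hP.integral_density hK hbs ω⟩,
    ⟨_, hP.BVnorm_density_le hK hbs⟩,
    ⟨max U c⁻¹, lt_max_of_lt_left hU, fun ω => ?_⟩,
    ⟨4 * K * (1 - θ)⁻¹ + 1, 1, add_pos_of_nonneg_of_pos
      (mul_nonneg (by positivity) (inv_nonneg.2 (sub_nonneg.2 hθ.2.le))) one_pos, one_pos,
      fun n ω ω' h => ?_⟩⟩
  · filter_upwards [hP.le_density hK hbs hMin ω, ae_mem_Icc_mLeb] with x hlow hx
    refine ⟨(inv_le_of_inv_le₀ hc (le_max_right _ _)).trans hlow, ?_⟩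
    exact (le_abs_self _).trans ((hP.abs_density_le hK hbs ω hx).trans (le_max_left _ _))
  · rw [Real.rpow_one]
    refine (hP.BVnorm_density_sub_le hK hθ.1.le hθ.2 h).trans ?_
    rw [add_mul, one_mul]
    exact le_add_of_nonneg_right (pow_nonneg hθ.1.le n)

end IsTransferFamily

theorem stmt11_general (m : ℕ) (T : Fin m → ℝ → ℝ)
    (hTmeas : ∀ i, Measurable (T i))
    -- the transfer operators with respect to Lebesgue measure, defined by duality
    (Pop : Fin m → (ℝ → ℝ) → ℝ → ℝ)
    (hdual : ∀ (i : Fin m) (f : ℝ → ℝ), Integrable f mLeb →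
      ∀ g : ℝ → ℝ, Measurable g → (∃ Cg : ℝ, ∀ x, |g x| ≤ Cg) →
        ∫ x, g (T i x) * f x ∂mLeb = ∫ x, g x * Pop i f x ∂mLeb)
    (hPopBV : ∀ (i : Fin m) (f : ℝ → ℝ), IsBV f → IsBV (Pop i f))
    -- (Dec): exponential decay on mean-zero BV functions
    (Cdec : ℝ) (θ : ℝ) (hθ : θ ∈ Set.Ioo (0 : ℝ) 1)
    (hDec : ∀ (n : ℕ), 1 ≤ n → ∀ (ω : Om m) (f : ℝ → ℝ), IsBV f →
      (∫ x, f x ∂mLeb) = 0 → BVnorm (Pcomp Pop ω n f) ≤ Cdec * θ ^ n * BVnorm f)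
    -- (Min): uniform lower bound
    (cmin : ℝ) (hcmin : 0 < cmin)
    (hMin : ∀ (n : ℕ), 1 ≤ n → ∀ (ω : Om m), ∀ x ∈ Set.Icc (0 : ℝ) 1,
      cmin ≤ Pcomp Pop ω n (fun _ => 1) x) :
    ∃ h : Om m → ℝ → ℝ, GoodFamily m Pop θ h ∧
      ∀ h' : Om m → ℝ → ℝ, GoodFamily m Pop θ h' → ∀ ω, h' ω =ᵐ[mLeb] h ω := by
  have hP : IsTransferFamily T Pop := ⟨hTmeas, hdual, hPopBV⟩
  have hgood := hP.goodFamily_density hDec hθ hcmin hMin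
  refine ⟨density Pop, hgood, fun h' hgood' ω => ?_⟩
  obtain ⟨hBV', heq', hprob', hB', -⟩ := hgood'
  obtain ⟨hBV, heq, hprob, hB, -⟩ := hgood
  exact hP.ae_eq_of_isEquivariant hDec hθ.1.le hθ.2 hBV' hBV heq' heq
    (fun ω => (hprob' ω).2.trans (hprob ω).2.symm) hB' hB ω

theorem stmt11 (m : ℕ) (hm : 1 ≤ m) (T : Fin m → ℝ → ℝ) (lam : ℝ) (hlam : 1 < lam)
    (hT : ∀ i, PiecewiseC2Expanding (T i) lam)
    (hmaps : ∀ i, Set.MapsTo (T i) (Set.Icc 0 1) (Set.Icc 0 1))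
    (hTmeas : ∀ i, Measurable (T i))
    -- the transfer operators with respect to Lebesgue measure, defined by duality
    (Pop : Fin m → (ℝ → ℝ) → ℝ → ℝ)
    (hdual : ∀ (i : Fin m) (f : ℝ → ℝ), Integrable f mLeb →
      ∀ g : ℝ → ℝ, Measurable g → (∃ Cg : ℝ, ∀ x, |g x| ≤ Cg) →
        ∫ x, g (T i x) * f x ∂mLeb = ∫ x, g x * Pop i f x ∂mLeb)
    (hPopBV : ∀ (i : Fin m) (f : ℝ → ℝ), IsBV f → IsBV (Pop i f))
    -- (LY): uniform Lasota–Yorke inequalities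
    (r : ℕ) (hr : 1 ≤ r) (M D : ℝ) (hM : 0 < M) (hD : 0 < D)
    (ρ : ℝ) (hρ : ρ ∈ Set.Ioo (0 : ℝ) 1)
    (hLY1 : ∀ (ω : Om m) (f : ℝ → ℝ), IsBV f → BVnorm (Pop (ω 0) f) ≤ M * BVnorm f)
    (hLY2 : ∀ (ω : Om m) (f : ℝ → ℝ), IsBV f →
      var (Pcomp Pop ω r f) ≤ ρ * var f + D * ∫ x, |f x| ∂mLeb)
    -- (Dec): exponential decay on mean-zero BV functions
    (Cdec : ℝ) (hCdec : 0 < Cdec) (θ : ℝ) (hθ : θ ∈ Set.Ioo (0 : ℝ) 1)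
    (hDec : ∀ (n : ℕ), 1 ≤ n → ∀ (ω : Om m) (f : ℝ → ℝ), IsBV f →
      (∫ x, f x ∂mLeb) = 0 → BVnorm (Pcomp Pop ω n f) ≤ Cdec * θ ^ n * BVnorm f)
    -- (Min): uniform lower bound
    (cmin : ℝ) (hcmin : 0 < cmin)
    (hMin : ∀ (n : ℕ), 1 ≤ n → ∀ (ω : Om m), ∀ x ∈ Set.Icc (0 : ℝ) 1,
      cmin ≤ Pcomp Pop ω n (fun _ => 1) x) :
    ∃ h : Om m → ℝ → ℝ, GoodFamily m Pop θ h ∧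
      ∀ h' : Om m → ℝ → ℝ, GoodFamily m Pop θ h' → ∀ ω, h' ω =ᵐ[mLeb] h ω :=
  stmt11_general m T hTmeas Pop hdual hPopBV Cdec θ hθ hDec cmin hcmin hMin
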